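/- Let C be a class of finite graphs. The following are equivalent: (1) C is topologically somewhere dense; (2) every finite graph belongs to C∇̃d for some d ∈ ℕ; (3) every finite graph belongs to C*∇̃d for some d ∈ ℕ; (4) the countably infinite clique K_ω belongs to C*∇̃ω; (5) the clique K_𝔠 on continuum many vertices belongs to C*∇̃ω. -/

import Mathlib

namespace NWD

open SimpleGraph Filter

/-! ### Shallow minors -/

/-- A `d`-shallow minor model of `H` in `G`: a family of pairwise disjoint branch sets,
each connected of radius at most `d` (witnessed by a center joined to every vertex of the
branch set by a walk of length at most `d` inside the branch set), such that every edge of `H`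
is realized by an edge of `G` between the corresponding branch sets. -/
def IsShallowMinorModel {V W : Type} (G : SimpleGraph V) (H : SimpleGraph W) (d : ℕ)
    (α : W → G.Subgraph) : Prop :=
  (∀ w : W, ∃ c : (α w).verts, ∀ x : (α w).verts, ∃ p : (α w).coe.Walk c x, p.length ≤ d) ∧
  (∀ w w' : W, w ≠ w' → Disjoint (α w).verts (α w').verts) ∧
  (∀ w w' : W, H.Adj w w' → ∃ x ∈ (α w).verts, ∃ y ∈ (α w').verts, G.Adj x y)

/-- `H` is a shallow minor of `G` at depth `d`. -/
def IsShallowMinor {V W : Type} (G : SimpleGraph V) (H : SimpleGraph W) (d : ℕ) : Prop :=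
  ∃ α : W → G.Subgraph, IsShallowMinorModel G H d α

/-! ### Topological shallow minors -/

/-- A `d`-shallow topological minor model of `H` in `G`: an injective map `f` on vertices
together with, for every edge `uv` of `H`, a path of length at most `2d+1` in `G` from `f u`
to `f v`; the paths are pairwise vertex-disjoint apart from possibly sharing endpoints. -/
def IsTopMinorModel {V W : Type} (G : SimpleGraph V) (H : SimpleGraph W) (d : ℕ)
    (f : W → V) (P : ∀ ⦃u v : W⦄, H.Adj u v → G.Walk (f u) (f v)) : Prop :=
  Function.Injective f ∧
  (∀ ⦃u v : W⦄ (h : H.Adj u v), (P h).IsPath) ∧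
  (∀ ⦃u v : W⦄ (h : H.Adj u v), (P h).length ≤ 2 * d + 1) ∧
  (∀ ⦃u v : W⦄ (h : H.Adj u v), P h.symm = (P h).reverse) ∧
  (∀ ⦃u v u' v' : W⦄ (h : H.Adj u v) (h' : H.Adj u' v'), s(u, v) ≠ s(u', v') →
    ∀ x : V, x ∈ (P h).support → x ∈ (P h').support →
      (x = f u ∨ x = f v) ∧ (x = f u' ∨ x = f v'))

/-- `H` is a topological shallow minor of `G` at depth `d`. -/
def IsTopShallowMinor {V W : Type} (G : SimpleGraph V) (H : SimpleGraph W) (d : ℕ) : Prop :=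
  ∃ (f : W → V) (P : ∀ ⦃u v : W⦄, H.Adj u v → G.Walk (f u) (f v)),
    IsTopMinorModel G H d f P

/-! ### Ultraproducts of graphs -/

/-- The setoid identifying sequences agreeing on a set of the ultrafilter. -/
def prodSetoid (U : Ultrafilter ℕ) (Vs : ℕ → Type) : Setoid (∀ n, Vs n) where
  r g h := ∀ᶠ n in (U : Filter ℕ), g n = h n
  iseqv := by
    constructor
    · intro g; exact Eventually.of_forall fun n => rfl
    · intro g h hg; exact hg.mono fun n hn => hn.symm
    · intro g h k h1 h2; filter_upwards [h1, h2] with n e1 e2; rw [e1, e2]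

/-- The vertex set of the ultraproduct. -/
def UVertex (U : Ultrafilter ℕ) (Vs : ℕ → Type) : Type := Quotient (prodSetoid U Vs)

/-- The ultraproduct of a sequence of graphs along the ultrafilter `U`. -/
def UGraph (U : Ultrafilter ℕ) {Vs : ℕ → Type} (Gs : ∀ n, SimpleGraph (Vs n)) :
    SimpleGraph (UVertex U Vs) where
  Adj x y := Quotient.liftOn₂ x y
    (fun g h => ∀ᶠ n in (U : Filter ℕ), (Gs n).Adj (g n) (h n))
    (by
      intro a b a' b' ha hb
      apply propext
      constructor
      · intro hadj; filter_upwards [hadj, ha, hb] with n h1 h2 h3; rw [← h2, ← h3]; exact h1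
      · intro hadj; filter_upwards [hadj, ha, hb] with n h1 h2 h3; rw [h2, h3]; exact h1)
  symm := by
    constructor
    intro x y
    refine Quotient.inductionOn₂ x y ?_
    intro g h hadj
    exact hadj.mono fun n hn => hn.symm
  loopless := by
    constructor
    intro x
    refine Quotient.inductionOn x ?_
    intro g hadj
    obtain ⟨n, hn⟩ := hadj.exists
    exact (Gs n).loopless.irrefl _ hn

/-! ### Graph classes and class limits -/

/-- A class of graphs: a predicate on graphs over arbitrary vertex types. -/
def GraphClass : Type 1 := ∀ V : Type, SimpleGraph V → Prop

/-- `C` is a class of finite graphs. -/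
def FiniteClass (C : GraphClass) : Prop :=
  ∀ (V : Type) (G : SimpleGraph V), C V G → Finite V

/-- `H` is (isomorphic to) a subgraph of `G`. -/
def IsSubgraphOf {W V : Type} (H : SimpleGraph W) (G : SimpleGraph V) : Prop :=
  ∃ f : W → V, Function.Injective f ∧ ∀ ⦃u v : W⦄, H.Adj u v → G.Adj (f u) (f v)

/-- Membership in the class limit `C*`: subgraphs of ultraproducts of sequences from `C`. -/
def InLimit (U : Ultrafilter ℕ) (C : GraphClass) {W : Type} (H : SimpleGraph W) : Prop :=
  ∃ (Vs : ℕ → Type) (Gs : ∀ n, SimpleGraph (Vs n)),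
    (∀ n, C (Vs n) (Gs n)) ∧ IsSubgraphOf H (UGraph U Gs)

/-- `H ∈ C ▽ d`. -/
def InClassMinor (C : GraphClass) (d : ℕ) {W : Type} (H : SimpleGraph W) : Prop :=
  ∃ (V : Type) (G : SimpleGraph V), C V G ∧ IsShallowMinor G H d

/-- `H ∈ C ∇̃ d`. -/
def InClassTopMinor (C : GraphClass) (d : ℕ) {W : Type} (H : SimpleGraph W) : Prop :=
  ∃ (V : Type) (G : SimpleGraph V), C V G ∧ IsTopShallowMinor G H d

/-- `H ∈ C* ▽ d`. -/
def InLimitMinor (U : Ultrafilter ℕ) (C : GraphClass) (d : ℕ) {W : Type}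
    (H : SimpleGraph W) : Prop :=
  ∃ (V : Type) (G : SimpleGraph V), InLimit U C G ∧ IsShallowMinor G H d

/-- `H ∈ C* ∇̃ d`. -/
def InLimitTopMinor (U : Ultrafilter ℕ) (C : GraphClass) (d : ℕ) {W : Type}
    (H : SimpleGraph W) : Prop :=
  ∃ (V : Type) (G : SimpleGraph V), InLimit U C G ∧ IsTopShallowMinor G H d

/-- `C` is somewhere dense: all finite graphs are shallow minors at some fixed depth. -/
def SomewhereDense (C : GraphClass) : Prop :=
  ∃ d : ℕ, ∀ (W : Type) (H : SimpleGraph W), Finite W → InClassMinor C d H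

/-- `C` is topologically somewhere dense. -/
def TopSomewhereDense (C : GraphClass) : Prop :=
  ∃ d : ℕ, ∀ (W : Type) (H : SimpleGraph W), Finite W → InClassTopMinor C d H

/-- The countably infinite clique `K_ω`. -/
def Komega : SimpleGraph ℕ := ⊤

/-- The clique on continuum many vertices `K_𝔠`. -/
def Kcontinuum : SimpleGraph (Set ℕ) := ⊤

/-- `C` is hereditary: closed under induced subgraphs. -/
def Hereditary (C : GraphClass) : Prop :=
  ∀ (V : Type) (G : SimpleGraph V), C V G →
    ∀ (W : Type) (f : W → V), Function.Injective f → C W (G.comap f)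

/-! ### Scattered sets and quasi-wideness -/

/-- `X` is a `d`-scattered set of `G - S`: it avoids `S`, and any two distinct vertices of `X`
are at distance greater than `2d` in `G - S` (every connecting walk avoiding `S` is longer
than `2d`). -/
def ScatteredIn {V : Type} (G : SimpleGraph V) (d : ℕ) (S X : Set V) : Prop :=
  Disjoint X S ∧ ∀ u ∈ X, ∀ v ∈ X, u ≠ v →
    ∀ p : G.Walk u v, (∀ x ∈ p.support, x ∉ S) → 2 * d < p.length

/-- `C` is quasi-wide with margin `s`. -/
def QuasiWide (C : GraphClass) (s : ℕ → ℕ) : Prop :=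
  ∀ d m : ℕ, ∃ N : ℕ, ∀ (V : Type) (G : SimpleGraph V), C V G → N ≤ Nat.card V →
    ∃ S X : Set V, S.Finite ∧ S.ncard ≤ s d ∧ X.Finite ∧ X.ncard = m ∧ ScatteredIn G d S X

/-- `C` is uniformly quasi-wide with margin `s`. -/
def UniformlyQuasiWide (C : GraphClass) (s : ℕ → ℕ) : Prop :=
  ∀ d m : ℕ, ∃ N : ℕ, ∀ (V : Type) (G : SimpleGraph V), C V G →
    ∀ W : Set V, N ≤ W.ncard →
      ∃ S X : Set V, S.Finite ∧ S.ncard ≤ s d ∧ X ⊆ W ∧ X.Finite ∧ X.ncard = m ∧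
        ScatteredIn G d S X

/-- `C` is limit quasi-wide. -/
def LimitQW (U : Ultrafilter ℕ) (C : GraphClass) : Prop :=
  ∀ (d : ℕ) (V : Type) (G : SimpleGraph V), InLimit U C G → Infinite V →
    ∃ S X : Set V, S.Finite ∧ X.Infinite ∧ ScatteredIn G d S X

/-- `C` is uniformly limit quasi-wide. -/
def UniformLimitQW (U : Ultrafilter ℕ) (C : GraphClass) : Prop :=
  ∀ (d : ℕ) (V : Type) (G : SimpleGraph V), InLimit U C G →
    ∀ W : Set V, W.Infinite →
      ∃ S X : Set V, S.Finite ∧ X ⊆ W ∧ X.Infinite ∧ ScatteredIn G d S X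

/-- `C` is strongly limit quasi-wide with margin `s`. -/
def StrongLimitQW (U : Ultrafilter ℕ) (C : GraphClass) (s : ℕ → ℕ) : Prop :=
  ∀ (d : ℕ) (V : Type) (G : SimpleGraph V), InLimit U C G → Infinite V →
    ∃ S X : Set V, S.Finite ∧ S.ncard ≤ s d ∧ X.Infinite ∧ ScatteredIn G d S X

/-- `C` is strongly uniformly limit quasi-wide with margin `s`. -/
def StrongUniformLimitQW (U : Ultrafilter ℕ) (C : GraphClass) (s : ℕ → ℕ) : Prop :=
  ∀ (d : ℕ) (V : Type) (G : SimpleGraph V), InLimit U C G →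
    ∀ W : Set V, W.Infinite →
      ∃ S X : Set V, S.Finite ∧ S.ncard ≤ s d ∧ X ⊆ W ∧ X.Infinite ∧ ScatteredIn G d S X

/-! ### The splitter game -/

/-- One round of the splitter game: from arena `A`, connector picks `v`, splitter picks `W`;
the new arena consists of the vertices of `A` outside `W` at distance at most `d` from `v`
in the subgraph induced by `A`. -/
def arenaStep {V : Type} (G : SimpleGraph V) (d : ℕ) (A : Set V) (v : V) (W : Set V) : Set V :=
  {x | x ∈ A ∧ x ∉ W ∧ ∃ p : G.Walk v x, p.length ≤ d ∧ ∀ y ∈ p.support, y ∈ A}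

/-- The arena after a (chronological) history of moves. -/
def arenaAfter {V : Type} (G : SimpleGraph V) (d : ℕ) (hist : List (V × Set V)) : Set V :=
  hist.foldl (fun A mv => arenaStep G d A mv.1 mv.2) Set.univ

/-- A strategy for splitter: given the history and connector's new move, produce a set. -/
def SplitterStrategy (V : Type) : Type := List (V × Set V) → V → Set V

/-- The history of the play where connector plays `c` and splitter follows `σ`. -/
def splitterHist {V : Type} (σ : SplitterStrategy V) (c : ℕ → V) : ℕ → List (V × Set V)
  | 0 => []
  | n + 1 => splitterHist σ c n ++ [(c n, σ (splitterHist σ c n) (c n))]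

/-- Connector's first `n` moves are valid (inside the successive arenas). -/
def ConsistentPlay {V : Type} (G : SimpleGraph V) (d : ℕ) (σ : SplitterStrategy V)
    (c : ℕ → V) (n : ℕ) : Prop :=
  ∀ k < n, c k ∈ arenaAfter G d (splitterHist σ c k)

/-- `σ` is a winning strategy for splitter in the limit `d`-splitter game on `G`:
its moves are valid (finite subsets of the arena) along any consistent play, and no
infinite sequence of valid connector moves exists. -/
def SplitterWinsLimit {V : Type} (G : SimpleGraph V) (d : ℕ) (σ : SplitterStrategy V) : Prop :=
  (∀ (c : ℕ → V) (n : ℕ), ConsistentPlay G d σ c (n + 1) →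
      (σ (splitterHist σ c n) (c n)).Finite ∧
      σ (splitterHist σ c n) (c n) ⊆ arenaAfter G d (splitterHist σ c n)) ∧
  (∀ c : ℕ → V, ∃ n : ℕ, c n ∉ arenaAfter G d (splitterHist σ c n))

/-- `σ` is a winning strategy for splitter in the `(ℓ, m, d)`-splitter game on `G`. -/
def SplitterWinsGame {V : Type} (G : SimpleGraph V) (l m d : ℕ) (σ : SplitterStrategy V) :
    Prop :=
  (∀ (c : ℕ → V) (n : ℕ), ConsistentPlay G d σ c (n + 1) →
      (σ (splitterHist σ c n) (c n)).Finite ∧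
      (σ (splitterHist σ c n) (c n)).ncard ≤ m ∧
      σ (splitterHist σ c n) (c n) ⊆ arenaAfter G d (splitterHist σ c n)) ∧
  (∀ c : ℕ → V, ∃ n ≤ l, c n ∉ arenaAfter G d (splitterHist σ c n))

/-- A strategy for connector: given the history, produce a vertex. -/
def ConnectorStrategy (V : Type) : Type := List (V × Set V) → V

/-- The history of the play where connector follows `τ` and splitter plays `w`. -/
def connectorHist {V : Type} (τ : ConnectorStrategy V) (w : ℕ → Set V) :
    ℕ → List (V × Set V)
  | 0 => []
  | n + 1 => connectorHist τ w n ++ [(τ (connectorHist τ w n), w n)]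

/-- `τ` is a winning strategy for connector in the limit `d`-splitter game on `G`:
as long as splitter's moves are valid, connector's moves stay in the arena forever. -/
def ConnectorWinsLimit {V : Type} (G : SimpleGraph V) (d : ℕ) (τ : ConnectorStrategy V) :
    Prop :=
  ∀ (w : ℕ → Set V) (n : ℕ),
    (∀ k < n, (w k).Finite ∧ w k ⊆ arenaAfter G d (connectorHist τ w k)) →
    τ (connectorHist τ w n) ∈ arenaAfter G d (connectorHist τ w n)

/-- `τ` is a winning strategy for connector in the `(ℓ, m, d)`-splitter game on `G`:
the arena stays nonempty for `ℓ` rounds, i.e. connector has valid moves at rounds `0,…,ℓ`. -/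
def ConnectorWinsGame {V : Type} (G : SimpleGraph V) (l m d : ℕ) (τ : ConnectorStrategy V) :
    Prop :=
  ∀ (w : ℕ → Set V) (n : ℕ), n ≤ l →
    (∀ k < n, (w k).Finite ∧ (w k).ncard ≤ m ∧
      w k ⊆ arenaAfter G d (connectorHist τ w k)) →
    τ (connectorHist τ w n) ∈ arenaAfter G d (connectorHist τ w n)

/-- `C` is winning for splitter. -/
def WinningForSplitter (C : GraphClass) : Prop :=
  ∀ d : ℕ, ∃ l m : ℕ, ∀ (V : Type) (G : SimpleGraph V), C V G →
    ∃ σ : SplitterStrategy V, SplitterWinsGame G l m d σ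

/-- `C` is limit winning for splitter. -/
def LimitWinningForSplitter (U : Ultrafilter ℕ) (C : GraphClass) : Prop :=
  ∀ (d : ℕ) (V : Type) (G : SimpleGraph V), InLimit U C G →
    ∃ σ : SplitterStrategy V, SplitterWinsLimit G d σ

/-! ### First-order satisfaction in graphs -/

/-- `G` satisfies the first-order sentence `φ` in the language of graphs. -/
def GSat {V : Type} (G : SimpleGraph V) (φ : FirstOrder.Language.graph.Sentence) : Prop :=
  @FirstOrder.Language.Sentence.Realize FirstOrder.Language.graph V G.structure φ


/-!
A depth-`d` topological minor model of a finite graph consists of finitely many vertices and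
paths of length at most `2d+1`, so it transfers between an ultraproduct and its factors. If a
finite `H` is such a minor of (a subgraph of) `∏_U Gₙ`, then for `U`-almost every `n` the
projection to the `n`-th coordinate is injective on the finitely many vertices involved and
preserves their adjacencies, which puts `H` into `Gₙ`. Conversely, if the clique on the `2ⁿ`
subsets of `{0, …, n-1}` is a depth-`d` topological minor of `Gₙ ∈ C` for every `n`, send
`A ⊆ ℕ` to the class of the sequence of branch vertices of the traces `A ∩ {0, …, n-1}`. As `U`
is non-principal, distinct sets have distinct traces for `U`-almost every `n`, and paths of
bounded length between the branch vertices have eventually constant length, so they glue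
coordinatewise to paths of the ultraproduct; this gives `K_𝔠`. The remaining implications are
monotonicity: `K_ω ⊆ K_𝔠`, finite graphs embed in `K_ω`, and `C ⊆ C*` via constant sequences.
-/

section TopMinor

variable {V V' W W' : Type} {G : SimpleGraph V} {G' : SimpleGraph V'} {H : SimpleGraph W}
  {K : SimpleGraph W'} {d : ℕ}

theorem IsTopShallowMinor.map (φ : G →g G') (hφ : Function.Injective φ)
    (h : IsTopShallowMinor G H d) : IsTopShallowMinor G' H d := by
  obtain ⟨f, P, hf, hpath, hlen, hsymm, hdisj⟩ := h
  refine ⟨φ ∘ f, fun u v h => (P h).map φ, hφ.comp hf, fun u v h => (hpath h).map hφ,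
    fun u v h => (Walk.length_map _ _).trans_le (hlen h),
    fun u v h => (congrArg (Walk.map φ) (hsymm h)).trans (Walk.reverse_map _ _).symm, ?_⟩
  intro u v u' v' h h' hne x hx hx'
  rw [Walk.support_map, List.mem_map] at hx hx'
  obtain ⟨y, hy, rfl⟩ := hx
  obtain ⟨y', hy', hyy'⟩ := hx'
  rw [hφ hyy'] at hy'
  obtain ⟨h₁, h₂⟩ := hdisj h h' hne y hy hy'
  exact ⟨h₁.imp (congrArg φ) (congrArg φ), h₂.imp (congrArg φ) (congrArg φ)⟩

theorem IsTopShallowMinor.of_injective_hom (ψ : H →g K) (hψ : Function.Injective ψ)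
    (h : IsTopShallowMinor G K d) : IsTopShallowMinor G H d := by
  obtain ⟨f, P, hf, hpath, hlen, hsymm, hdisj⟩ := h
  refine ⟨f ∘ ψ, fun u v h => P (ψ.map_adj h), hf.comp hψ, fun u v h => hpath _,
    fun u v h => hlen _, fun u v h => hsymm _, fun u v u' v' h h' hne =>
      hdisj (ψ.map_adj h) (ψ.map_adj h') fun e => hne ?_⟩
  rcases Sym2.eq_iff.1 e with ⟨e₁, e₂⟩ | ⟨e₁, e₂⟩
  · rw [hψ e₁, hψ e₂]
  · rw [hψ e₁, hψ e₂, Sym2.eq_swap]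

theorem IsTopShallowMinor.of_top_of_embedding (e : W ↪ W')
    (h : IsTopShallowMinor G (⊤ : SimpleGraph W') d) : IsTopShallowMinor G H d :=
  h.of_injective_hom ((Embedding.completeGraph e).toHom.comp (Hom.ofLE le_top)) e.injective

/-- Orient every edge along a well-order of `W` and use the reversed path against the
orientation. -/
theorem IsTopShallowMinor.of_paths {f : W → V} (hf : Function.Injective f)
    (Q : ∀ u v : W, H.Adj u v → G.Walk (f u) (f v)) (hpath : ∀ u v h, (Q u v h).IsPath)
    (hlen : ∀ u v h, (Q u v h).length ≤ 2 * d + 1)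
    (hdisj : ∀ u v u' v' (h : H.Adj u v) (h' : H.Adj u' v'), s(u, v) ≠ s(u', v') →
      ∀ x ∈ (Q u v h).support, x ∈ (Q u' v' h').support →
        (x = f u ∨ x = f v) ∧ (x = f u' ∨ x = f v')) :
    IsTopShallowMinor G H d := by
  classical
  let R : ∀ ⦃u v : W⦄, H.Adj u v → G.Walk (f u) (f v) := fun u v h =>
    if WellOrderingRel u v then Q u v h else (Q v u h.symm).reverse
  have hR : ∀ ⦃u v⦄ (h : H.Adj u v), R h = Q u v h ∨ R h = (Q v u h.symm).reverse :=
    fun u v h => by by_cases r : WellOrderingRel u v <;> simp [R, r]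
  have hsupp : ∀ ⦃u v⦄ (h : H.Adj u v) x, x ∈ (R h).support →
      ∃ a b, ∃ hab : H.Adj a b, s(a, b) = s(u, v) ∧ x ∈ (Q a b hab).support := by
    intro u v h x hx
    rcases hR h with e | e <;> rw [e] at hx
    · exact ⟨u, v, h, rfl, hx⟩
    · exact ⟨v, u, h.symm, Sym2.eq_swap, by simpa using hx⟩
  have hends : ∀ {a b u v : W}, s(a, b) = s(u, v) → ∀ x : V,
      (x = f a ∨ x = f b) → (x = f u ∨ x = f v) := by
    intro a b u v e x
    rcases Sym2.eq_iff.1 e with ⟨rfl, rfl⟩ | ⟨rfl, rfl⟩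
    exacts [id, Or.symm]
  refine ⟨f, R, hf, fun u v h => ?_, fun u v h => ?_, fun u v h => ?_, ?_⟩
  · rcases hR h with e | e <;> rw [e]
    exacts [hpath u v h, (hpath v u h.symm).reverse]
  · rcases hR h with e | e <;> rw [e]
    exacts [hlen u v h, (Walk.length_reverse _).trans_le (hlen v u h.symm)]
  · rcases trichotomous_of WellOrderingRel u v with r | rfl | r
    · simp [R, r, asymm r]
    · exact absurd rfl h.ne
    · simp [R, r, asymm r]
  · intro u v u' v' h h' hne x hx hx'
    obtain ⟨a, b, hab, e, hx⟩ := hsupp h x hx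
    obtain ⟨a', b', hab', e', hx'⟩ := hsupp h' x hx'
    obtain ⟨h₁, h₂⟩ := hdisj a b a' b' hab hab' (e ▸ e' ▸ hne) x hx hx'
    exact ⟨hends e x h₁, hends e' x h₂⟩

theorem IsTopMinorModel.isTopShallowMinor_induce {f : W → V}
    {P : ∀ ⦃u v : W⦄, H.Adj u v → G.Walk (f u) (f v)} (hm : IsTopMinorModel G H d f P)
    {S : Set V} (hfS : ∀ u, f u ∈ S)
    (hPS : ∀ ⦃u v⦄ (h : H.Adj u v), ∀ x ∈ (P h).support, x ∈ S) :
    IsTopShallowMinor (G.induce S) H d := by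
  obtain ⟨hf, hpath, hlen, hsymm, hdisj⟩ := hm
  let ι := (Embedding.induce (G := G) S).toHom
  have hι : Function.Injective ι := Subtype.val_injective
  refine ⟨fun u => ⟨f u, hfS u⟩, fun u v h => (P h).induce S (hPS h),
    fun u v e => hf (congrArg Subtype.val e), fun u v h => ?_, fun u v h => ?_,
    fun u v h => Walk.map_injective_of_injective hι _ _ ?_, ?_⟩
  · rw [← Walk.isPath_map_iff_of_injective hι, Walk.map_induce]
    exact hpath h
  · rw [← Walk.length_map ι, Walk.map_induce]
    exact hlen h
  · rw [← Walk.reverse_map, Walk.map_induce, Walk.map_induce]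
    exact hsymm h
  · intro u v u' v' h h' hne x hx hx'
    simp only [Walk.support_induce, List.mem_attachWith] at hx hx'
    simpa only [Subtype.ext_iff] using hdisj h h' hne x hx hx'

theorem IsTopShallowMinor.exists_finite_induce [Finite W] (h : IsTopShallowMinor G H d) :
    ∃ S : Set V, S.Finite ∧ IsTopShallowMinor (G.induce S) H d := by
  obtain ⟨f, P, hm⟩ := h
  refine ⟨Set.range f ∪ ⋃ (e : W × W) (h : H.Adj e.1 e.2), {x | x ∈ (P h).support},
    (Set.finite_range f).union (Set.finite_iUnion fun e =>
      Set.finite_iUnion fun h => (P h).support.finite_toSet),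
    hm.isTopShallowMinor_induce (fun u => .inl ⟨u, rfl⟩) fun u v h x hx => .inr ?_⟩
  exact Set.mem_iUnion₂.2 ⟨(u, v), h, hx⟩

theorem IsTopShallowMinor.exists_clique_paths (h : IsTopShallowMinor G (⊤ : SimpleGraph W) d) :
    ∃ (f : W → V) (w : ∀ u v, G.Walk (f u) (f v)), Function.Injective f ∧
      (∀ u v, (w u v).IsPath ∧ (w u v).length ≤ 2 * d + 1) ∧
      ∀ u v u' v', u ≠ v → u' ≠ v' → s(u, v) ≠ s(u', v') →
        ∀ x ∈ (w u v).support, x ∈ (w u' v').support →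
          (x = f u ∨ x = f v) ∧ (x = f u' ∨ x = f v') := by
  classical
  obtain ⟨f, P, hf, hpath, hlen, -, hdisj⟩ := h
  let w : ∀ u v, G.Walk (f u) (f v) := fun u v =>
    if huv : u = v then Walk.nil.copy rfl (congrArg f huv) else P ((top_adj u v).2 huv)
  have hw : ∀ u v (huv : u ≠ v), w u v = P ((top_adj u v).2 huv) := fun u v huv => dif_neg huv
  refine ⟨f, w, hf, fun u v => ?_, fun u v u' v' huv hu'v' => ?_⟩
  · by_cases huv : u = v
    · subst huv
      simp [w]
    · rw [hw u v huv]
      exact ⟨hpath _, hlen _⟩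
  · rw [hw u v huv, hw u' v' hu'v']
    exact hdisj _ _

end TopMinor

theorem eventually_injOn {ι α : Type} {β : ι → Type} {l : Filter ι} (π : ∀ i, α → β i)
    (hπ : ∀ a b, a ≠ b → ∀ᶠ i in l, π i a ≠ π i b) {s : Set α} (hs : s.Finite) :
    ∀ᶠ i in l, Set.InjOn (π i) s := by
  refine (hs.eventually_all.2 fun a _ => hs.eventually_all.2 fun b _ => ?_).mono
    fun i h a ha b hb => h a ha b hb
  by_cases hab : a = b
  · exact .of_forall fun _ _ => hab
  · exact (hπ a b hab).mono fun _ hne e => absurd e hne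

theorem exists_eventually_eq_of_le {α : Type} (f : Ultrafilter α) {t : α → ℕ}
    {L : ℕ} (ht : ∀ a, t a ≤ L) : ∃ ℓ ≤ L, ∀ᶠ a in (f : Filter α), t a = ℓ := by
  obtain ⟨ℓ, hℓ, hf⟩ := Ultrafilter.eq_pure_of_finite_mem (f := f.map t) (Set.finite_Iic L)
    (Ultrafilter.mem_map.2 (Filter.univ_mem' ht))
  have hℓ' : {ℓ} ∈ f.map t := by
    rw [hf]
    exact Ultrafilter.mem_pure.2 rfl
  exact ⟨ℓ, hℓ, hℓ'⟩

theorem le_atTop_of_forall_singleton_notMem {U : Ultrafilter ℕ}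
    (hU : ∀ a : ℕ, {a} ∉ U) : (U : Filter ℕ) ≤ atTop := by
  rcases U.le_cofinite_or_eq_pure with h | ⟨a, rfl⟩
  · exact Nat.cofinite_eq_atTop ▸ h
  · exact absurd rfl (hU a)

def UVertex.mk (U : Ultrafilter ℕ) {Vs : ℕ → Type} (g : ∀ n, Vs n) : UVertex U Vs :=
  Quotient.mk _ g

section Ultraproduct

variable {U : Ultrafilter ℕ} {Vs : ℕ → Type} {Gs : ∀ n, SimpleGraph (Vs n)}

noncomputable def UVertex.out (x : UVertex U Vs) : ∀ n, Vs n := Quotient.out x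

theorem UVertex.mk_eq_mk {g h : ∀ n, Vs n} :
    UVertex.mk U g = UVertex.mk U h ↔ ∀ᶠ n in (U : Filter ℕ), g n = h n :=
  Quotient.eq

theorem UVertex.mk_out (x : UVertex U Vs) : UVertex.mk U x.out = x := Quotient.out_eq x

theorem UGraph.adj_mk {g h : ∀ n, Vs n} :
    (UGraph U Gs).Adj (UVertex.mk U g) (UVertex.mk U h) ↔
      ∀ᶠ n in (U : Filter ℕ), (Gs n).Adj (g n) (h n) :=
  Iff.rfl

theorem UVertex.eventually_out_mk (g : ∀ n, Vs n) :
    ∀ᶠ n in (U : Filter ℕ), (UVertex.mk U g).out n = g n :=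
  UVertex.mk_eq_mk.1 (UVertex.mk_out _)

theorem UVertex.eq_mk_of_eventually_out_eq {x : UVertex U Vs} {g : ∀ n, Vs n}
    (h : ∀ᶠ n in (U : Filter ℕ), x.out n = g n) : x = UVertex.mk U g :=
  x.mk_out ▸ UVertex.mk_eq_mk.2 h

theorem UVertex.eventually_out_ne {x y : UVertex U Vs} (h : x ≠ y) :
    ∀ᶠ n in (U : Filter ℕ), x.out n ≠ y.out n :=
  Ultrafilter.eventually_not.2 fun he => h (x.mk_out ▸ y.mk_out ▸ UVertex.mk_eq_mk.2 he)

theorem UGraph.eventually_adj_out {x y : UVertex U Vs} (h : (UGraph U Gs).Adj x y) :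
    ∀ᶠ n in (U : Filter ℕ), (Gs n).Adj (x.out n) (y.out n) :=
  UGraph.adj_mk.1 (by rwa [x.mk_out, y.mk_out])

theorem inLimit_of_mem {C : GraphClass} {V : Type} {G : SimpleGraph V} (hG : C V G) :
    InLimit U C G :=
  ⟨fun _ => V, fun _ => G, fun _ => hG, fun v => UVertex.mk U fun _ => v,
    fun _ _ e => (UVertex.mk_eq_mk.1 e).exists.choose_spec, fun _ _ h => .of_forall fun _ => h⟩

theorem exists_injective_hom_induce_ugraph {S : Set (UVertex U Vs)} (hS : S.Finite) :
    ∃ n, ∃ φ : (UGraph U Gs).induce S →g Gs n, Function.Injective φ := by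
  have hadj : ∀ᶠ n in (U : Filter ℕ), ∀ x ∈ S, ∀ y ∈ S,
      (UGraph U Gs).Adj x y → (Gs n).Adj (x.out n) (y.out n) := by
    refine hS.eventually_all.2 fun x _ => hS.eventually_all.2 fun y _ => ?_
    exact Filter.eventually_imp_distrib_left.2 UGraph.eventually_adj_out
  obtain ⟨n, hinj, hadj⟩ :=
    ((eventually_injOn (fun n x => x.out n) (fun _ _ => UVertex.eventually_out_ne) hS).and
      hadj).exists
  exact ⟨n, ⟨fun x => x.1.out n, fun {x y} h => hadj x x.2 y y.2 h⟩,
    fun x y e => Subtype.ext (hinj x.2 y.2 e)⟩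

theorem exists_walk_ugraph_of_eventually_length_eq :
    ∀ (ℓ : ℕ) {a b : ∀ n, Vs n} (p : ∀ n, (Gs n).Walk (a n) (b n)),
      (∀ᶠ n in (U : Filter ℕ), (p n).length = ℓ) →
      ∃ q : (UGraph U Gs).Walk (UVertex.mk U a) (UVertex.mk U b), q.length = ℓ ∧
        ∀ᶠ n in (U : Filter ℕ), q.support.map (fun x => x.out n) = (p n).support
  | 0, a, b, p, hp => by
    have hab : UVertex.mk U a = UVertex.mk U b :=
      UVertex.mk_eq_mk.2 (hp.mono fun n hn => Walk.eq_of_length_eq_zero hn)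
    refine ⟨Walk.nil.copy rfl hab, Walk.length_copy _ _ _, ?_⟩
    filter_upwards [hp, UVertex.eventually_out_mk a] with n hn ha
    rw [Walk.support_copy, Walk.support_nil, List.map_singleton, ha,
      Walk.nil_iff_support_eq.1 (Walk.length_eq_zero_iff.1 hn)]
  | ℓ + 1, a, b, p, hp => by
    have hnil : ∀ᶠ n in (U : Filter ℕ), ¬ (p n).Nil :=
      hp.mono fun n hn h => by simp [Walk.length_eq_zero_iff.2 h] at hn
    obtain ⟨q, hq, hqs⟩ := exists_walk_ugraph_of_eventually_length_eq ℓ (fun n => (p n).tail)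
      (hp.mono fun n hn => by rw [Walk.length_tail, hn]; rfl)
    have hadj : (UGraph U Gs).Adj (UVertex.mk U a) (UVertex.mk U fun n => (p n).snd) :=
      UGraph.adj_mk.2 <| hnil.mono fun n h => Walk.adj_snd h
    refine ⟨Walk.cons hadj q, by rw [Walk.length_cons, hq], ?_⟩
    filter_upwards [hqs, hnil, UVertex.eventually_out_mk a] with n hn hnil ha
    rw [Walk.support_cons, List.map_cons, hn, ha, Walk.support_tail_of_not_nil _ hnil,
      Walk.cons_tail_support]

theorem exists_walk_ugraph {a b : ∀ n, Vs n} (p : ∀ n, (Gs n).Walk (a n) (b n)) {L : ℕ}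
    (hL : ∀ n, (p n).length ≤ L) :
    ∃ q : (UGraph U Gs).Walk (UVertex.mk U a) (UVertex.mk U b), q.length ≤ L ∧
      ∀ᶠ n in (U : Filter ℕ), q.support.map (fun x => x.out n) = (p n).support := by
  obtain ⟨ℓ, hℓL, hℓ⟩ := exists_eventually_eq_of_le U hL
  obtain ⟨q, hq, hqs⟩ := exists_walk_ugraph_of_eventually_length_eq ℓ p hℓ
  exact ⟨q, hq ▸ hℓL, hqs⟩

theorem isTopShallowMinor_top_ugraph {T : ℕ → Type} {W : Type} {d : ℕ}
    (hm : ∀ n, IsTopShallowMinor (Gs n) (⊤ : SimpleGraph (T n)) d) (π : ∀ n, W → T n)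
    (hπ : ∀ u v, u ≠ v → ∀ᶠ n in (U : Filter ℕ), π n u ≠ π n v) :
    IsTopShallowMinor (UGraph U Gs) (⊤ : SimpleGraph W) d := by
  choose f w hf hw hdisj using fun n => (hm n).exists_clique_paths
  let F : W → UVertex U Vs := fun u => UVertex.mk U fun n => f n (π n u)
  choose Q hQlen hQ using fun u v =>
    exists_walk_ugraph (U := U) (fun n => w n (π n u) (π n v)) fun n => (hw n _ _).2
  refine IsTopShallowMinor.of_paths (f := F) (fun u v hF => ?_) (fun u v _ => Q u v)
    (fun u v _ => ?_) (fun u v _ => hQlen u v) fun u v u' v' h h' hne x hx hx' => ?_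
  · by_contra huv
    obtain ⟨n, he, hn⟩ := ((UVertex.mk_eq_mk.1 hF).and (hπ u v huv)).exists
    exact hn (hf n he)
  · obtain ⟨n, hn⟩ := (hQ u v).exists
    exact (Walk.isPath_def _).2 (List.Nodup.of_map _ (hn ▸ (hw n _ _).1.support_nodup))
  · have hends : ∀ᶠ n in (U : Filter ℕ),
        (x.out n = f n (π n u) ∨ x.out n = f n (π n v)) ∧
          (x.out n = f n (π n u') ∨ x.out n = f n (π n v')) := by
      filter_upwards [hQ u v, hQ u' v', eventually_injOn π hπ (s := {u, v, u', v'})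
        (Set.toFinite _)] with n hn hn' hinj
      have hsep : s(π n u, π n v) ≠ s(π n u', π n v') := fun e => hne <| by
        rcases Sym2.eq_iff.1 e with ⟨e₁, e₂⟩ | ⟨e₁, e₂⟩
        · rw [hinj (by simp) (by simp) e₁, hinj (by simp) (by simp) e₂]
        · rw [hinj (by simp) (by simp) e₁, hinj (by simp) (by simp) e₂, Sym2.eq_swap]
      refine hdisj n _ _ _ _ (hinj.ne (by simp) (by simp) h.ne)
        (hinj.ne (by simp) (by simp) h'.ne) hsep _ (hn ▸ List.mem_map_of_mem hx)
        (hn' ▸ List.mem_map_of_mem hx')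
    have hor : ∀ {g g' : ∀ n, Vs n}, (∀ᶠ n in (U : Filter ℕ), x.out n = g n ∨ x.out n = g' n) →
        x = UVertex.mk U g ∨ x = UVertex.mk U g' := fun h =>
      (Ultrafilter.eventually_or.1 h).imp UVertex.eq_mk_of_eventually_out_eq
        UVertex.eq_mk_of_eventually_out_eq
    exact ⟨hor (hends.mono fun _ h => h.1), hor (hends.mono fun _ h => h.2)⟩

end Ultraproduct

theorem InLimitTopMinor.inClassTopMinor {U : Ultrafilter ℕ} {C : GraphClass} {d : ℕ} {W : Type}
    [Finite W] {H : SimpleGraph W} (h : InLimitTopMinor U C d H) : InClassTopMinor C d H := by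
  obtain ⟨V, G, ⟨Vs, Gs, hC, g, hg, hgadj⟩, hm⟩ := h
  obtain ⟨S, hS, hmS⟩ := (hm.map ⟨g, fun h => hgadj h⟩ hg).exists_finite_induce
  obtain ⟨n, φ, hφ⟩ := exists_injective_hom_induce_ugraph hS
  exact ⟨Vs n, Gs n, hC n, hmS.map φ hφ⟩

theorem eventually_setOf_fin_ne {U : Ultrafilter ℕ} (hU : ∀ a : ℕ, {a} ∉ U) {A B : Set ℕ}
    (hAB : A ≠ B) : ∀ᶠ n in (U : Filter ℕ), {i : Fin n | ↑i ∈ A} ≠ {i : Fin n | ↑i ∈ B} := by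
  obtain ⟨m, hm⟩ := not_forall.1 (mt Set.ext hAB)
  filter_upwards [(le_atTop_of_forall_singleton_notMem hU) (eventually_gt_atTop m)] with n hn e
  exact hm (by simpa using congrArg (⟨m, hn⟩ ∈ ·) e)

theorem top_dense_equiv_general (U : Ultrafilter ℕ) (hU : ∀ a : ℕ, {a} ∉ U)
    (C : GraphClass) :
    [TopSomewhereDense C,
     ∃ d : ℕ, ∀ (W : Type) (H : SimpleGraph W), Finite W → InClassTopMinor C d H,
     ∃ d : ℕ, ∀ (W : Type) (H : SimpleGraph W), Finite W → InLimitTopMinor U C d H,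
     ∃ d : ℕ, InLimitTopMinor U C d Komega,
     ∃ d : ℕ, InLimitTopMinor U C d Kcontinuum].TFAE := by
  tfae_have 1 ↔ 2 := Iff.rfl
  tfae_have 2 → 3
  | ⟨d, h⟩ => ⟨d, fun W H hW =>
      let ⟨V, G, hG, hm⟩ := h W H hW
      ⟨V, G, inLimit_of_mem hG, hm⟩⟩
  tfae_have 3 → 2
  | ⟨d, h⟩ => ⟨d, fun W H _ => (h W H ‹_›).inClassTopMinor⟩
  tfae_have 5 → 4
  | ⟨d, V, G, hG, hm⟩ =>
      ⟨d, V, G, hG, hm.of_top_of_embedding ⟨singleton, Set.singleton_injective⟩⟩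
  tfae_have 4 → 3 := by
    rintro ⟨d, V, G, hG, hm⟩
    refine ⟨d, fun W H _ => ?_⟩
    obtain ⟨g, hg⟩ := exists_injective_nat W
    exact ⟨V, G, hG, hm.of_top_of_embedding ⟨g, hg⟩⟩
  tfae_have 2 → 5 := by
    rintro ⟨d, h⟩
    choose Vs Gs hC hm using fun n => h (Set (Fin n)) ⊤ inferInstance
    exact ⟨d, UVertex U Vs, UGraph U Gs, ⟨Vs, Gs, hC, id, Function.injective_id, fun _ _ => id⟩,
      isTopShallowMinor_top_ugraph hm (fun n A => {i : Fin n | ↑i ∈ A})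
        fun _ _ => eventually_setOf_fin_ne hU⟩
  tfae_finish

/-- For a class `C` of finite graphs, the following are equivalent:
(1) `C` is topologically somewhere dense; (2) every finite graph is in `C ∇̃ d` for some `d`;
(3) every finite graph is in `C* ∇̃ d` for some `d`; (4) `K_ω ∈ C* ∇̃ ω`;
(5) `K_𝔠 ∈ C* ∇̃ ω`. -/
theorem top_dense_equiv (U : Ultrafilter ℕ) (hU : ∀ a : ℕ, {a} ∉ U)
    (C : GraphClass) (hfin : FiniteClass C) :
    [TopSomewhereDense C,
     ∃ d : ℕ, ∀ (W : Type) (H : SimpleGraph W), Finite W → InClassTopMinor C d H,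
     ∃ d : ℕ, ∀ (W : Type) (H : SimpleGraph W), Finite W → InLimitTopMinor U C d H,
     ∃ d : ℕ, InLimitTopMinor U C d Komega,
     ∃ d : ℕ, InLimitTopMinor U C d Kcontinuum].TFAE :=
  top_dense_equiv_general U hU C

end NWD
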